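/- Let f : ℝ^p → ℝ be C¹ with L-Lipschitz gradient, C ⊆ ℝ^p nonempty closed, 0 < γ < 1/L, and (x_k) generated by x_{k+1} ∈ proj_C(x_k − γ∇f(x_k)). If (x_k) has an accumulation point, then dist(−∇f(x_{k+1}), N̂_C(x_{k+1})) → 0 as k → ∞. -/

import Mathlib

open scoped RealInnerProductSpace

/-- The regular (Fréchet) normal cone of a set `C` at `x`. -/
def regNormalCone {p : ℕ} (C : Set (EuclideanSpace ℝ (Fin p)))
    (x : EuclideanSpace ℝ (Fin p)) : Set (EuclideanSpace ℝ (Fin p)) :=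
  {v | ∀ ε : ℝ, 0 < ε → ∃ δ : ℝ, 0 < δ ∧ ∀ y ∈ C, ‖y - x‖ < δ →
    ⟪v, y - x⟫ ≤ ε * ‖y - x‖}

section aux

variable {p : ℕ}

lemma line_hasDerivAt (f : EuclideanSpace ℝ (Fin p) → ℝ) (hf : ContDiff ℝ 1 f)
    (a d : EuclideanSpace ℝ (Fin p)) (t : ℝ) :
    HasDerivAt (fun s : ℝ => f (a + s • d)) ⟪gradient f (a + t • d), d⟫ t := by
  have hdiff : DifferentiableAt ℝ f (a + t • d) := (hf.differentiable one_ne_zero) _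
  have hF : HasFDerivAt f
      ((InnerProductSpace.toDual ℝ _) (gradient f (a + t • d))) (a + t • d) :=
    hasGradientAt_iff_hasFDerivAt.mp hdiff.hasGradientAt
  have hline : HasDerivAt (fun s : ℝ => a + s • d) d t := by
    simpa using ((hasDerivAt_id t).smul_const d).const_add a
  exact hF.comp_hasDerivAt t hline

/-- Descent lemma for functions with Lipschitz gradient. -/
lemma descent_lemma (L : ℝ) (f : EuclideanSpace ℝ (Fin p) → ℝ) (hf : ContDiff ℝ 1 f)
    (hlip : ∀ a b, ‖gradient f a - gradient f b‖ ≤ L * ‖a - b‖)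
    (a b : EuclideanSpace ℝ (Fin p)) :
    f b ≤ f a + ⟪gradient f a, b - a⟫ + L / 2 * ‖b - a‖ ^ 2 := by
  set d := b - a with hd
  set φ : ℝ → ℝ := fun t => f (a + t • d) - t * ⟪gradient f a, d⟫ - L * t ^ 2 / 2 * ‖d‖ ^ 2
    with hφdef
  have hφ : ∀ t : ℝ, HasDerivAt φ
      (⟪gradient f (a + t • d), d⟫ - ⟪gradient f a, d⟫ - L * t * ‖d‖ ^ 2) t := by
    intro t
    have h1 := line_hasDerivAt f hf a d t
    have h2 : HasDerivAt (fun s : ℝ => s * ⟪gradient f a, d⟫) ⟪gradient f a, d⟫ t := by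
      simpa using (hasDerivAt_id t).mul_const ⟪gradient f a, d⟫
    have h3 : HasDerivAt (fun s : ℝ => L * s ^ 2 / 2 * ‖d‖ ^ 2) (L * t * ‖d‖ ^ 2) t := by
      have hp : HasDerivAt (fun s : ℝ => s ^ 2) (2 * t) t := by
        simpa using hasDerivAt_pow 2 t
      have := ((hp.const_mul L).div_const 2).mul_const (‖d‖ ^ 2)
      rw [show L * t * ‖d‖ ^ 2 = L * (2 * t) / 2 * ‖d‖ ^ 2 by ring]; exact this
    exact (h1.sub h2).sub h3
  have hdiffφ : Differentiable ℝ φ := fun t => (hφ t).differentiableAt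
  have hanti : AntitoneOn φ (Set.Icc 0 1) := by
    apply antitoneOn_of_deriv_nonpos (convex_Icc 0 1) hdiffφ.continuous.continuousOn
      (fun t _ => (hdiffφ t).differentiableWithinAt)
    intro t ht
    rw [(hφ t).deriv]
    rw [interior_Icc] at ht
    have hsplit : ⟪gradient f (a + t • d), d⟫ - ⟪gradient f a, d⟫
        = ⟪gradient f (a + t • d) - gradient f a, d⟫ := by
      rw [inner_sub_left]
    have hcs : ⟪gradient f (a + t • d) - gradient f a, d⟫
        ≤ ‖gradient f (a + t • d) - gradient f a‖ * ‖d‖ :=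
      real_inner_le_norm _ _
    have hl : ‖gradient f (a + t • d) - gradient f a‖ ≤ L * (t * ‖d‖) := by
      have := hlip (a + t • d) a
      simpa [norm_smul, abs_of_pos ht.1, mul_assoc] using this
    have hd0 : (0:ℝ) ≤ ‖d‖ := norm_nonneg _
    nlinarith [ht.1.le]
  have h01 := hanti (Set.mem_Icc.mpr ⟨le_rfl, zero_le_one⟩)
      (Set.mem_Icc.mpr ⟨zero_le_one, le_rfl⟩) zero_le_one
  have hab : a + d = b := by rw [hd]; abel
  have h0 : φ 0 = f a := by simp [hφdef]
  have h1 : φ 1 = f b - ⟪gradient f a, d⟫ - L / 2 * ‖d‖ ^ 2 := by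
    simp [hφdef, hab]
  rw [h0, h1] at h01
  linarith

/-- A positive multiple of `z - proj` belongs to the regular normal cone at the projection. -/
lemma proj_mem_cone (C : Set (EuclideanSpace ℝ (Fin p))) (z xp : EuclideanSpace ℝ (Fin p))
    (hxp : xp ∈ C) (hproj : ∀ y ∈ C, ‖z - xp‖ ≤ ‖z - y‖) (c : ℝ) (hc : 0 < c) :
    c • (z - xp) ∈ regNormalCone C xp := by
  simp only [regNormalCone, Set.mem_setOf_eq]
  intro ε hε
  refine ⟨2 * ε / c, by positivity, fun y hy hyδ => ?_⟩
  have h2 : ‖z - xp‖ ^ 2 ≤ ‖z - y‖ ^ 2 :=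
    pow_le_pow_left₀ (norm_nonneg _) (hproj y hy) 2
  have hzy : z - y = (z - xp) - (y - xp) := by abel
  have hexp : ‖(z - xp) - (y - xp)‖ ^ 2
      = ‖z - xp‖ ^ 2 - 2 * ⟪z - xp, y - xp⟫ + ‖y - xp‖ ^ 2 := norm_sub_sq_real _ _
  rw [hzy, hexp] at h2
  have hkey : 2 * ⟪z - xp, y - xp⟫ ≤ ‖y - xp‖ ^ 2 := by linarith
  rw [real_inner_smul_left]
  have hn0 : (0:ℝ) ≤ ‖y - xp‖ := norm_nonneg _
  have hδ : ‖y - xp‖ * c < 2 * ε := by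
    rw [lt_div_iff₀ hc] at hyδ; linarith
  nlinarith

end aux

/-- Along a projected gradient sequence with an accumulation point, the distance
of `-∇f(x_{k+1})` to the regular normal cone at `x_{k+1}` tends to zero. -/
theorem stmt19 {p : ℕ} (L γ : ℝ) (hL : 0 < L) (hγ : 0 < γ) (hγL : γ < 1 / L)
    (f : EuclideanSpace ℝ (Fin p) → ℝ) (hf : ContDiff ℝ 1 f)
    (hlip : ∀ a b, ‖gradient f a - gradient f b‖ ≤ L * ‖a - b‖)
    (C : Set (EuclideanSpace ℝ (Fin p))) (hCne : C.Nonempty) (hCcl : IsClosed C)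
    (x : ℕ → EuclideanSpace ℝ (Fin p)) (hx0 : x 0 ∈ C)
    (hiter : ∀ k, x (k + 1) ∈ C ∧ ∀ y ∈ C,
      ‖(x k - γ • gradient f (x k)) - x (k + 1)‖ ≤ ‖(x k - γ • gradient f (x k)) - y‖)
    (hacc : ∃ xb, MapClusterPt xb Filter.atTop x) :
    Filter.Tendsto
      (fun k => Metric.infDist (-gradient f (x (k + 1))) (regNormalCone C (x (k + 1))))
      Filter.atTop (nhds 0) := by
  obtain ⟨xb, hxb⟩ := hacc
  have hmem : ∀ k, x k ∈ C := by
    intro k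
    cases k with
    | zero => exact hx0
    | succ n => exact (hiter n).1
  have hLγ : L * γ < 1 := by
    rw [lt_div_iff₀ hL] at hγL; linarith
  have h2γ : (0:ℝ) < 2 * γ := by linarith
  have hcpos : (0:ℝ) < 1 / (2 * γ) - L / 2 := by
    rw [sub_pos, div_lt_div_iff₀ (by norm_num) h2γ]
    nlinarith
  -- sufficient decrease
  have hstep : ∀ k, f (x (k + 1)) + (1 / (2 * γ) - L / 2) * ‖x (k + 1) - x k‖ ^ 2 ≤ f (x k) := by
    intro k
    have hproj := (hiter k).2 (x k) (hmem k)
    set g := gradient f (x k) with hg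
    set Δ := x (k + 1) - x k with hΔ
    have hv : (x k - γ • g) - x (k + 1) = -(Δ + γ • g) := by rw [hΔ]; abel
    have hw : (x k - γ • g) - x k = -(γ • g) := by abel
    rw [hv, hw] at hproj
    have hsq : ‖-(Δ + γ • g)‖ ^ 2 ≤ ‖-(γ • g)‖ ^ 2 :=
      pow_le_pow_left₀ (norm_nonneg _) hproj 2
    have hexp : ‖-(Δ + γ • g)‖ ^ 2 = ‖Δ‖ ^ 2 + 2 * (γ * ⟪Δ, g⟫) + γ ^ 2 * ‖g‖ ^ 2 := by
      rw [norm_neg, norm_add_sq_real, real_inner_smul_right, norm_smul]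
      rw [Real.norm_eq_abs, abs_of_pos hγ]
      ring
    have hn2 : ‖-(γ • g)‖ ^ 2 = γ ^ 2 * ‖g‖ ^ 2 := by
      rw [norm_neg, norm_smul, Real.norm_eq_abs, abs_of_pos hγ]
      ring
    rw [hexp, hn2] at hsq
    have hkey : 2 * γ * ⟪Δ, g⟫ + ‖Δ‖ ^ 2 ≤ 0 := by linarith
    have hdesc := descent_lemma L f hf hlip (x k) (x (k + 1))
    rw [← hg, ← hΔ] at hdesc
    have hsym : ⟪g, Δ⟫ = ⟪Δ, g⟫ := real_inner_comm _ _
    rw [hsym] at hdesc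
    have hIneq : 1 / (2 * γ) * ‖Δ‖ ^ 2 ≤ -⟪Δ, g⟫ := by
      rw [div_mul_eq_mul_div, div_le_iff₀ h2γ]
      nlinarith
    linarith
  have hmono : Antitone fun k => f (x k) := by
    apply antitone_nat_of_succ_le
    intro k
    have hnn : (0:ℝ) ≤ (1 / (2 * γ) - L / 2) * ‖x (k + 1) - x k‖ ^ 2 :=
      mul_nonneg hcpos.le (by positivity)
    linarith [hstep k]
  have hflb : ∀ k, f xb ≤ f (x k) := by
    intro k
    by_contra hlt
    push_neg at hlt
    have hcl : MapClusterPt (f xb) Filter.atTop (f ∘ x) :=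
      hxb.continuousAt_comp hf.continuous.continuousAt
    have hfreq : ∃ᶠ j in Filter.atTop, (f ∘ x) j ∈ Set.Ioi (f (x k)) :=
      (mapClusterPt_iff_frequently.mp hcl) _ (Ioi_mem_nhds hlt)
    have hev : ∀ᶠ j in Filter.atTop, f (x j) ≤ f (x k) :=
      Filter.eventually_atTop.mpr ⟨k, fun j hj => hmono hj⟩
    obtain ⟨j, hj1, hj2⟩ := (hfreq.and_eventually hev).exists
    exact absurd (Set.mem_Ioi.mp hj1) (not_lt.mpr hj2)
  have hbdd : BddBelow (Set.range fun k => f (x k)) := by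
    refine ⟨f xb, ?_⟩
    rintro y ⟨k, rfl⟩
    exact hflb k
  have htend : Filter.Tendsto (fun k => f (x k)) Filter.atTop (nhds (⨅ k, f (x k))) :=
    tendsto_atTop_ciInf hmono hbdd
  have htend' : Filter.Tendsto (fun k => f (x (k + 1))) Filter.atTop (nhds (⨅ k, f (x k))) :=
    htend.comp (Filter.tendsto_add_atTop_nat 1)
  have hdiff0 : Filter.Tendsto (fun k => f (x k) - f (x (k + 1))) Filter.atTop (nhds 0) := by
    simpa using htend.sub htend'
  have hsq0 : Filter.Tendsto (fun k => ‖x (k + 1) - x k‖ ^ 2) Filter.atTop (nhds 0) := by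
    apply squeeze_zero (fun k => by positivity)
      (g := fun k => (f (x k) - f (x (k + 1))) / (1 / (2 * γ) - L / 2))
      (fun k => (le_div_iff₀ hcpos).mpr (by nlinarith [hstep k]))
    simpa using hdiff0.div_const _
  have hnorm0 : Filter.Tendsto (fun k => ‖x (k + 1) - x k‖) Filter.atTop (nhds 0) := by
    have := hsq0.sqrt
    simpa [Real.sqrt_sq (norm_nonneg _)] using this
  apply squeeze_zero (g := fun k => (γ⁻¹ + L) * ‖x (k + 1) - x k‖)
    (fun k => Metric.infDist_nonneg) ?_ ?_
  · intro k
    have hv : γ⁻¹ • ((x k - γ • gradient f (x k)) - x (k + 1)) ∈ regNormalCone C (x (k + 1)) :=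
      proj_mem_cone C _ _ (hiter k).1 (hiter k).2 γ⁻¹ (inv_pos.mpr hγ)
    refine le_trans (Metric.infDist_le_dist_of_mem hv) ?_
    rw [dist_eq_norm]
    have hrw : -gradient f (x (k + 1)) - γ⁻¹ • ((x k - γ • gradient f (x k)) - x (k + 1))
        = γ⁻¹ • (x (k + 1) - x k) + (gradient f (x k) - gradient f (x (k + 1))) := by
      match_scalars <;> field_simp
    rw [hrw]
    calc ‖γ⁻¹ • (x (k + 1) - x k) + (gradient f (x k) - gradient f (x (k + 1)))‖
        ≤ ‖γ⁻¹ • (x (k + 1) - x k)‖ + ‖gradient f (x k) - gradient f (x (k + 1))‖ :=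
          norm_add_le _ _
      _ ≤ γ⁻¹ * ‖x (k + 1) - x k‖ + L * ‖x k - x (k + 1)‖ := by
          refine add_le_add ?_ (hlip _ _)
          rw [norm_smul, Real.norm_eq_abs, abs_of_pos (inv_pos.mpr hγ)]
      _ = (γ⁻¹ + L) * ‖x (k + 1) - x k‖ := by rw [norm_sub_rev]; ring
  · simpa using hnorm0.const_mul (γ⁻¹ + L)
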